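/- Let Q be a sub-rate matrix, D : Set ι, and A ⊆ B ⊆ D subsets of ι. Then for every x ∉ D, every real t ≥ 0, and every x0 : ι, ∑ y ∈ A, (Matrix.exp ℝ (t • Q_A)) x0 y * Q y x ≤ ∑ y ∈ B, (Matrix.exp ℝ (t • Q_B)) x0 y * Q y x. (Finite-state core of Theorem 1.1(i) of the paper: the ETFSP approximations μ^r(t,x) = ∑_{y ∈ D_r} ν^r(t,y) q(y,x) of the exit density form an increasing family as the truncation grows.) -/

import Mathlib

/-- Mathlib's exponential, specialized to real matrices (`Matrix.exp ℝ`). -/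
noncomputable def Matrix.exp (𝕂 : Type*) [Field 𝕂] {ι : Type*} [Fintype ι] [DecidableEq ι]
    [Algebra 𝕂 ℝ] (A : Matrix ι ι ℝ) : Matrix ι ι ℝ :=
  (NormedSpace.expSeries 𝕂 (Matrix ι ι ℝ)).sum A

open Classical in
/-- The truncation `Q_A` of `Q` to `A`: every state outside `A` is made absorbing. -/
noncomputable def Matrix.truncation {ι : Type*} (Q : Matrix ι ι ℝ) (A : Set ι) :
    Matrix ι ι ℝ :=
  Matrix.of fun x y => if x ∈ A then Q x y else 0

/-!
Adding `c • 1` to a Metzler matrix makes it entrywise nonnegative and multiplies its exponential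
by `Real.exp c`, so up to a positive factor the entries of `exp (t • Q_A)` are power series with
nonnegative coefficients in the entries of a nonnegative matrix. In a column `y ∈ A` the shifted
`t • Q_A` is dominated by the shifted `t • Q_B`, and a path through a state outside `A` is absorbed
there and never reaches `y`; hence the domination passes to every power and to the exponential.
Finally `Q y x ≥ 0` for `y ∈ B` and `x ∉ D`, so the extra terms `y ∈ B \ A` are nonnegative.
-/

open Finset
open scoped Nat

theorem finsum_mem_le_finsum_mem_of_subset {α M : Type*} [Finite α] [AddCommMonoid M]
    [PartialOrder M] [IsOrderedAddMonoid M] {s t : Set α} {f g : α → M} (hst : s ⊆ t)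
    (hfg : ∀ a ∈ s, f a ≤ g a) (hg : ∀ a ∈ t \ s, 0 ≤ g a) :
    ∑ᶠ a ∈ s, f a ≤ ∑ᶠ a ∈ t, g a := by
  rw [finsum_mem_def, finsum_mem_def]
  refine finsum_le_finsum' (Set.toFinite _) (Set.toFinite _) fun a => ?_
  by_cases has : a ∈ s
  · simpa [Set.indicator_of_mem has, Set.indicator_of_mem (hst has)] using hfg a has
  · rw [Set.indicator_of_notMem has]
    by_cases hat : a ∈ t
    · rw [Set.indicator_of_mem hat]
      exact hg a ⟨hat, has⟩
    · rw [Set.indicator_of_notMem hat]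

namespace Matrix

section Metzler

variable {ι : Type*}

def IsMetzler (M : Matrix ι ι ℝ) : Prop :=
  ∀ i j, i ≠ j → M i j ≥ 0

theorem IsMetzler.smul {M : Matrix ι ι ℝ} (hM : M.IsMetzler) {t : ℝ} (ht : 0 ≤ t) :
    (t • M).IsMetzler :=
  fun i j hij => mul_nonneg ht (hM i j hij)

theorem truncation_apply_of_notMem (Q : Matrix ι ι ℝ) {S : Set ι} {i : ι} (hi : i ∉ S)
    (j : ι) : Q.truncation S i j = 0 := by
  simp [truncation, hi]

theorem IsMetzler.truncation {Q : Matrix ι ι ℝ} (hQ : Q.IsMetzler) (S : Set ι) :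
    (Q.truncation S).IsMetzler := by
  intro i j hij
  by_cases hi : i ∈ S
  · simpa [Matrix.truncation, hi] using hQ i j hij
  · rw [truncation_apply_of_notMem Q hi]

theorem IsMetzler.truncation_apply_le_truncation_apply {Q : Matrix ι ι ℝ} (hQ : Q.IsMetzler)
    {A B : Set ι} (hAB : A ⊆ B) (i : ι) {j : ι} (hj : j ∈ A) :
    Q.truncation A i j ≤ Q.truncation B i j := by
  by_cases hiA : i ∈ A
  · simp [Matrix.truncation, hiA, hAB hiA]
  · rw [truncation_apply_of_notMem Q hiA]
    by_cases hiB : i ∈ B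
    · simpa [Matrix.truncation, hiB] using hQ i j (ne_of_mem_of_not_mem hj hiA).symm
    · rw [truncation_apply_of_notMem Q hiB]

theorem IsMetzler.add_smul_one_apply_nonneg [DecidableEq ι] {M : Matrix ι ι ℝ}
    (hM : M.IsMetzler) {c : ℝ} (hc : ∀ i, -M i i ≤ c) (i j : ι) :
    0 ≤ (M + c • (1 : Matrix ι ι ℝ)) i j := by
  rcases eq_or_ne i j with rfl | hij
  · simp only [add_apply, smul_apply, one_apply_eq, smul_eq_mul, mul_one]
    linarith [hc i]
  · simpa [one_apply_ne hij] using hM i j hij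

end Metzler

variable {ι : Type*} [Fintype ι] [DecidableEq ι]

theorem pow_apply_eq_zero_of_absorbing {M : Matrix ι ι ℝ} {z : ι}
    (hz : ∀ w, w ≠ z → M z w = 0) {j : ι} (hj : j ≠ z) : ∀ n : ℕ, (M ^ n) z j = 0
  | 0 => by rw [pow_zero, one_apply_ne hj.symm]
  | n + 1 => by
    rw [pow_succ', mul_apply, sum_eq_single z (fun w _ hw => by rw [hz w hw, zero_mul])
      (fun h => absurd (mem_univ z) h), pow_apply_eq_zero_of_absorbing hz hj n, mul_zero]

theorem pow_apply_le_pow_apply_of_absorbing {M M' : Matrix ι ι ℝ} {A : Set ι}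
    (hM : ∀ i j, 0 ≤ M i j) (hM' : ∀ i j, 0 ≤ M' i j)
    (habs : ∀ z ∉ A, ∀ w, w ≠ z → M z w = 0) (hle : ∀ i, ∀ j ∈ A, M i j ≤ M' i j) :
    ∀ (n : ℕ) (i : ι) {j : ι}, j ∈ A → (M ^ n) i j ≤ (M' ^ n) i j
  | 0, _, _, _ => le_rfl
  | n + 1, i, j, hj => by
    rw [pow_succ', pow_succ', mul_apply, mul_apply]
    refine sum_le_sum fun z _ => ?_
    by_cases hz : z ∈ A
    · exact mul_le_mul (hle i z hz) (pow_apply_le_pow_apply_of_absorbing hM hM' habs hle n z hj)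
        (pow_apply_nonneg hM n z j) (hM' i z)
    · rw [pow_apply_eq_zero_of_absorbing (habs z hz) (ne_of_mem_of_not_mem hj hz), mul_zero]
      exact mul_nonneg (hM' i z) (pow_apply_nonneg hM' n z j)

theorem exp_eq_normedSpace_exp (M : Matrix ι ι ℝ) : exp ℝ M = NormedSpace.exp M := by
  rw [Matrix.exp, NormedSpace.exp_eq_expSeries_sum ℝ]

section LinftyOpNorm

attribute [local instance] Matrix.linftyOpNormedRing Matrix.linftyOpNormedAlgebra

theorem hasSum_exp_apply (M : Matrix ι ι ℝ) (i j : ι) :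
    HasSum (fun n : ℕ => (n ! : ℝ)⁻¹ * (M ^ n) i j) (exp ℝ M i j) := by
  rw [exp_eq_normedSpace_exp]
  exact Pi.hasSum.mp (Pi.hasSum.mp (NormedSpace.exp_series_hasSum_exp' (𝕂 := ℝ) M) i) j

end LinftyOpNorm

theorem exp_add_smul_one (M : Matrix ι ι ℝ) (c : ℝ) :
    exp ℝ (M + c • 1) = Real.exp c • exp ℝ M := by
  rw [exp_eq_normedSpace_exp, exp_eq_normedSpace_exp,
    exp_add_of_commute _ _ ((Commute.one_right M).smul_right c), smul_one_eq_diagonal,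
    exp_diagonal, Pi.exp_def]
  simp only [← Real.exp_eq_exp_ℝ]
  rw [← smul_one_eq_diagonal, mul_smul_one]

theorem exp_apply_nonneg_of_nonneg {M : Matrix ι ι ℝ} (hM : ∀ i j, 0 ≤ M i j) (i j : ι) :
    0 ≤ exp ℝ M i j :=
  (hasSum_exp_apply M i j).nonneg fun n => mul_nonneg (by positivity) (pow_apply_nonneg hM n i j)

theorem exp_apply_le_exp_apply_of_absorbing {M M' : Matrix ι ι ℝ} {A : Set ι}
    (hM : ∀ i j, 0 ≤ M i j) (hM' : ∀ i j, 0 ≤ M' i j)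
    (habs : ∀ z ∉ A, ∀ w, w ≠ z → M z w = 0) (hle : ∀ i, ∀ j ∈ A, M i j ≤ M' i j)
    (i : ι) {j : ι} (hj : j ∈ A) : exp ℝ M i j ≤ exp ℝ M' i j :=
  hasSum_le (fun n => mul_le_mul_of_nonneg_left
      (pow_apply_le_pow_apply_of_absorbing hM hM' habs hle n i hj) (by positivity))
    (hasSum_exp_apply M i j) (hasSum_exp_apply M' i j)

theorem IsMetzler.exp_apply_nonneg {M : Matrix ι ι ℝ} (hM : M.IsMetzler) (i j : ι) :
    0 ≤ exp ℝ M i j := by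
  obtain ⟨c, hc⟩ := Finite.exists_le fun i => -M i i
  have hshift := exp_apply_nonneg_of_nonneg (hM.add_smul_one_apply_nonneg hc) i j
  rw [exp_add_smul_one, smul_apply, smul_eq_mul] at hshift
  exact nonneg_of_mul_nonneg_right hshift (Real.exp_pos c)

theorem IsMetzler.exp_apply_le_exp_apply_of_absorbing {M M' : Matrix ι ι ℝ} {A : Set ι}
    (hM : M.IsMetzler) (hM' : M'.IsMetzler)
    (habs : ∀ z ∉ A, ∀ w, w ≠ z → M z w = 0) (hle : ∀ i, ∀ j ∈ A, M i j ≤ M' i j)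
    (i : ι) {j : ι} (hj : j ∈ A) : exp ℝ M i j ≤ exp ℝ M' i j := by
  obtain ⟨c, hc⟩ := Finite.exists_le fun i => max (-M i i) (-M' i i)
  have hshift := Matrix.exp_apply_le_exp_apply_of_absorbing (A := A) (M := M + c • 1)
    (M' := M' + c • 1)
    (hM.add_smul_one_apply_nonneg fun i => (le_max_left _ _).trans (hc i))
    (hM'.add_smul_one_apply_nonneg fun i => (le_max_right _ _).trans (hc i))
    (fun z hz w hw => by simp [habs z hz w hw, one_apply_ne hw.symm])
    (fun i j hj => by simpa only [add_apply, add_le_add_iff_right] using hle i j hj) i hj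
  rw [exp_add_smul_one, exp_add_smul_one, smul_apply, smul_apply, smul_eq_mul,
    smul_eq_mul] at hshift
  exact le_of_mul_le_mul_left hshift (Real.exp_pos c)

end Matrix

theorem matrix_exit_density_truncation_monotone_general {ι : Type*} [Fintype ι] [DecidableEq ι]
    (Q : Matrix ι ι ℝ) (hMetzler : ∀ x y, x ≠ y → Q x y ≥ 0)
    (D A B : Set ι) (hAB : A ⊆ B) (hBD : B ⊆ D) :
    ∀ x ∉ D, ∀ t : ℝ, 0 ≤ t → ∀ x0 : ι,
      ∑ᶠ y ∈ A, Matrix.exp ℝ (t • Q.truncation A) x0 y * Q y x ≤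
        ∑ᶠ y ∈ B, Matrix.exp ℝ (t • Q.truncation B) x0 y * Q y x := by
  intro x hxD t ht x0
  have hQ : Q.IsMetzler := hMetzler
  have hQA : (t • Q.truncation A).IsMetzler := (hQ.truncation A).smul ht
  have hQB : (t • Q.truncation B).IsMetzler := (hQ.truncation B).smul ht
  have hexp_le : ∀ y ∈ A,
      Matrix.exp ℝ (t • Q.truncation A) x0 y ≤ Matrix.exp ℝ (t • Q.truncation B) x0 y :=
    fun y hy => hQA.exp_apply_le_exp_apply_of_absorbing hQB
      (fun z hz w _ => by rw [Matrix.smul_apply, Q.truncation_apply_of_notMem hz, smul_zero])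
      (fun i j hj => smul_le_smul_of_nonneg_left
        (hQ.truncation_apply_le_truncation_apply hAB i hj) ht) x0 hy
  have hrate_nonneg : ∀ y ∈ B, 0 ≤ Q y x :=
    fun y hy => hQ y x (ne_of_mem_of_not_mem (hBD hy) hxD)
  exact finsum_mem_le_finsum_mem_of_subset hAB
    (fun y hy => mul_le_mul_of_nonneg_right (hexp_le y hy) (hrate_nonneg y (hAB hy)))
    (fun y hy => mul_nonneg (hQB.exp_apply_nonneg x0 y) (hrate_nonneg y hy.1))

/-- For a sub-rate matrix `Q`, a domain `D` and truncated domains `A ⊆ B ⊆ D`, the ETFSP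
approximations of the exit density, `∑_{y ∈ A} exp (t • Q_A) x0 y * Q y x` for `x ∉ D`,
form an increasing family as the truncation grows. -/
theorem matrix_exit_density_truncation_monotone {ι : Type*} [Fintype ι] [DecidableEq ι]
    [Nonempty ι] (Q : Matrix ι ι ℝ) (hMetzler : ∀ x y, x ≠ y → Q x y ≥ 0)
    (hrow : ∀ x, ∑ y, Q x y ≤ 0) (D A B : Set ι) (hAB : A ⊆ B) (hBD : B ⊆ D) :
    ∀ x ∉ D, ∀ t : ℝ, 0 ≤ t → ∀ x0 : ι,
      ∑ᶠ y ∈ A, Matrix.exp ℝ (t • Q.truncation A) x0 y * Q y x ≤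
        ∑ᶠ y ∈ B, Matrix.exp ℝ (t • Q.truncation B) x0 y * Q y x :=
  matrix_exit_density_truncation_monotone_general Q hMetzler D A B hAB hBD
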